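/- The bistar graph B(n, m) (two adjacent centers u₀ and v₀, with u₀ adjacent to n additional leaves and v₀ adjacent to m additional leaves) is a difference graph. The labeling f(u₀) = 2n, f(u_i) = 2i − 1 for 1 ≤ i ≤ n, f(v_j) = 2n + j(2n + 2) for 1 ≤ j ≤ m, f(v₀) = 4n + 2m(n + 1) is a valid difference labeling. -/
import Mathlib


/-- Directed edge relation of the bistar `B(n,m)`: `Sum.inl 0 = u₀`,
`Sum.inl i = uᵢ`, `Sum.inr 0 = v₀`, `Sum.inr j = vⱼ`. -/
def bistarRel (n m : ℕ) : (Fin (n + 1) ⊕ Fin (m + 1)) → (Fin (n + 1) ⊕ Fin (m + 1)) → Prop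
  | Sum.inl i, Sum.inr j => (i : ℕ) = 0 ∧ (j : ℕ) = 0
  | Sum.inl i, Sum.inl i' => (i : ℕ) = 0 ∧ (i' : ℕ) ≠ 0
  | Sum.inr j, Sum.inr j' => (j : ℕ) = 0 ∧ (j' : ℕ) ≠ 0
  | _, _ => False

/-- Adjacency in the bistar graph. -/
def bistarAdj (n m : ℕ) (x y : Fin (n + 1) ⊕ Fin (m + 1)) : Prop :=
  bistarRel n m x y ∨ bistarRel n m y x

/-- Labeling of the bistar: `u₀ ↦ 2n`, `uᵢ ↦ 2i − 1`, `v₀ ↦ 4n + 2m(n+1)`,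
`vⱼ ↦ 2n + j(2n+2)`. -/
def bistarLabel (n m : ℕ) : (Fin (n + 1) ⊕ Fin (m + 1)) → ℕ
  | Sum.inl i => if (i : ℕ) = 0 then 2 * n else 2 * (i : ℕ) - 1
  | Sum.inr j => if (j : ℕ) = 0 then 4 * n + 2 * m * (n + 1)
                 else 2 * n + (j : ℕ) * (2 * n + 2)

lemma bistar_mem_iff (n m : ℕ) (x : ℕ) :
    x ∈ Set.range (bistarLabel n m) ↔
      x = 2*n ∨ (∃ i, 1 ≤ i ∧ i ≤ n ∧ x = 2*i - 1) ∨
      (∃ j, 1 ≤ j ∧ j ≤ m ∧ x = 2*n + j*(2*n+2)) ∨ x = 4*n + 2*m*(n+1) := by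
  constructor
  · rintro ⟨w, rfl⟩
    obtain (⟨i, hi⟩ | ⟨j, hj⟩) := w
    · by_cases h : i = 0
      · left; simp [bistarLabel, h]
      · right; left
        exact ⟨i, by omega, by omega, by simp [bistarLabel, h]⟩
    · by_cases h : j = 0
      · right; right; right; simp [bistarLabel, h]
      · right; right; left
        exact ⟨j, by omega, by omega, by simp [bistarLabel, h]⟩
  · rintro (rfl | ⟨i, h1, h2, rfl⟩ | ⟨j, h1, h2, rfl⟩ | rfl)
    · exact ⟨Sum.inl ⟨0, by omega⟩, by simp [bistarLabel]⟩
    · have hi : i ≠ 0 := by omega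
      exact ⟨Sum.inl ⟨i, by omega⟩, by simp [bistarLabel, hi]⟩
    · have hj : j ≠ 0 := by omega
      exact ⟨Sum.inr ⟨j, by omega⟩, by simp [bistarLabel, hj]⟩
    · exact ⟨Sum.inr ⟨0, by omega⟩, by simp [bistarLabel]⟩
/-- The bistar graph `B(n,m)` (`n, m ≥ 1`) is a difference graph via the
labeling above. -/
theorem stmt_8 (n m : ℕ) (hn : 1 ≤ n) (hm : 1 ≤ m) :
    Function.Injective (bistarLabel n m) ∧
    ∀ x y, x ≠ y →
      (bistarAdj n m x y ↔
        ((bistarLabel n m x : ℤ) - (bistarLabel n m y : ℤ)).natAbs ∈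
          Set.range (bistarLabel n m)) := by
  have e2 : 2*m*(n+1) = m*(2*n+2) := by ring
  have hmA : 1*(2*n+2) ≤ m*(2*n+2) := Nat.mul_le_mul_right _ hm
  have emA : m*(2*n+2) = 2*(m*(n+1)) := by ring
  constructor
  · rintro (⟨i, hi⟩ | ⟨j, hj⟩) (⟨i', hi'⟩ | ⟨j', hj'⟩) h <;>
      simp only [bistarLabel] at h <;> split_ifs at h with h1 h2
    · exact congrArg Sum.inl (Fin.ext (show i = i' by omega))
    · exact absurd h (by omega)
    · exact absurd h (by omega)
    · exact congrArg Sum.inl (Fin.ext (show i = i' by omega))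
    · exact absurd h (by omega)
    · -- 2n = 2n + j'(2n+2)
      have := Nat.mul_le_mul_right (2*n+2) (show 1 ≤ (j':ℕ) by omega)
      exact absurd h (by omega)
    · exact absurd h (by omega)
    · have e : (j':ℕ)*(2*n+2) = 2*((j':ℕ)*(n+1)) := by ring
      exact absurd h (by omega)
    · exact absurd h (by omega)
    · have e : (j:ℕ)*(2*n+2) = 2*((j:ℕ)*(n+1)) := by ring
      exact absurd h (by omega)
    · have := Nat.mul_le_mul_right (2*n+2) (show 1 ≤ (j:ℕ) by omega)
      exact absurd h (by omega)
    · exact absurd h (by omega)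
    · exact congrArg Sum.inr (Fin.ext (show j = j' by omega))
    · have := Nat.mul_le_mul_right (2*n+2) (show (j':ℕ) ≤ m by omega)
      exact absurd h (by omega)
    · have := Nat.mul_le_mul_right (2*n+2) (show (j:ℕ) ≤ m by omega)
      exact absurd h (by omega)
    · have : (j:ℕ) = j' := Nat.eq_of_mul_eq_mul_right (show 0 < 2*n+2 by omega) (by omega)
      exact congrArg Sum.inr (Fin.ext this)
  · rintro (⟨i, hi⟩ | ⟨j, hj⟩) (⟨i', hi'⟩ | ⟨j', hj'⟩) hxy <;>
      rw [bistar_mem_iff] <;> simp only [bistarLabel]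
    -- inl inl
    · by_cases h1 : i = 0 <;> by_cases h2 : i' = 0
      · exact absurd (congrArg Sum.inl (Fin.ext (show i = i' by omega))) hxy
      · rw [if_pos h1, if_neg h2]
        constructor
        · intro _
          exact Or.inr (Or.inl ⟨n - i' + 1, by omega, by omega, by omega⟩)
        · intro _; exact Or.inl ⟨h1, h2⟩
      · rw [if_neg h1, if_pos h2]
        constructor
        · intro _
          exact Or.inr (Or.inl ⟨n - i + 1, by omega, by omega, by omega⟩)
        · intro _; exact Or.inr ⟨h2, h1⟩
      · rw [if_neg h1, if_neg h2]
        constructor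
        · rintro (⟨ha, _⟩ | ⟨ha, _⟩)
          · exact absurd ha h1
          · exact absurd ha h2
        · rintro (hd | ⟨i0, hb1, hb2, hd⟩ | ⟨j0, hb1, hb2, hd⟩ | hd)
          · exact absurd hd (by omega)
          · exact absurd hd (by omega)
          · have := Nat.mul_le_mul_right (2*n+2) hb1
            exact absurd hd (by omega)
          · exact absurd hd (by omega)
    -- inl inr
    · by_cases h1 : i = 0 <;> by_cases h2 : j' = 0
      · rw [if_pos h1, if_pos h2]
        constructor
        · intro _
          exact Or.inr (Or.inr (Or.inl ⟨m, hm, le_refl m, by omega⟩))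
        · intro _; exact Or.inl ⟨h1, h2⟩
      · rw [if_pos h1, if_neg h2]
        constructor
        · rintro (⟨_, ha⟩ | ha)
          · exact absurd ha h2
          · exact ha.elim
        · rintro (hd | ⟨i0, hb1, hb2, hd⟩ | ⟨j0, hb1, hb2, hd⟩ | hd)
          · have := Nat.mul_le_mul_right (2*n+2) (show 1 ≤ (j':ℕ) by omega)
            exact absurd hd (by omega)
          · have e : (j':ℕ)*(2*n+2) = 2*((j':ℕ)*(n+1)) := by ring
            exact absurd hd (by omega)
          · rcases le_or_gt (j':ℕ) j0 with hc | hc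
            · have := Nat.mul_le_mul_right (2*n+2) hc
              exact absurd hd (by omega)
            · have h3 := Nat.mul_le_mul_right (2*n+2) (show j0 + 1 ≤ (j':ℕ) by omega)
              have h4 : (j0+1)*(2*n+2) = j0*(2*n+2) + 1*(2*n+2) := by ring
              exact absurd hd (by omega)
          · have := Nat.mul_le_mul_right (2*n+2) (show (j':ℕ) ≤ m by omega)
            exact absurd hd (by omega)
      · rw [if_neg h1, if_pos h2]
        constructor
        · rintro (⟨ha, _⟩ | ha)
          · exact absurd ha h1
          · exact ha.elim
        · rintro (hd | ⟨i0, hb1, hb2, hd⟩ | ⟨j0, hb1, hb2, hd⟩ | hd)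
          · exact absurd hd (by omega)
          · exact absurd hd (by omega)
          · have e : j0*(2*n+2) = 2*(j0*(n+1)) := by ring
            exact absurd hd (by omega)
          · exact absurd hd (by omega)
      · rw [if_neg h1, if_neg h2]
        constructor
        · rintro (⟨ha, _⟩ | ha)
          · exact absurd ha h1
          · exact ha.elim
        · have eJ : (j':ℕ)*(2*n+2) = 2*((j':ℕ)*(n+1)) := by ring
          have hJ1 := Nat.mul_le_mul_right (2*n+2) (show 1 ≤ (j':ℕ) by omega)
          rintro (hd | ⟨i0, hb1, hb2, hd⟩ | ⟨j0, hb1, hb2, hd⟩ | hd)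
          · exact absurd hd (by omega)
          · exact absurd hd (by omega)
          · have e : j0*(2*n+2) = 2*(j0*(n+1)) := by ring
            exact absurd hd (by omega)
          · exact absurd hd (by omega)
    -- inr inl
    · by_cases h1 : j = 0 <;> by_cases h2 : i' = 0
      · rw [if_pos h1, if_pos h2]
        constructor
        · intro _
          exact Or.inr (Or.inr (Or.inl ⟨m, hm, le_refl m, by omega⟩))
        · intro _; exact Or.inr ⟨h2, h1⟩
      · rw [if_pos h1, if_neg h2]
        constructor
        · rintro (ha | ⟨ha, _⟩)
          · exact ha.elim
          · exact absurd ha h2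
        · rintro (hd | ⟨i0, hb1, hb2, hd⟩ | ⟨j0, hb1, hb2, hd⟩ | hd)
          · exact absurd hd (by omega)
          · exact absurd hd (by omega)
          · have e : j0*(2*n+2) = 2*(j0*(n+1)) := by ring
            exact absurd hd (by omega)
          · exact absurd hd (by omega)
      · rw [if_neg h1, if_pos h2]
        constructor
        · rintro (ha | ⟨_, ha⟩)
          · exact ha.elim
          · exact absurd ha h1
        · rintro (hd | ⟨i0, hb1, hb2, hd⟩ | ⟨j0, hb1, hb2, hd⟩ | hd)
          · have := Nat.mul_le_mul_right (2*n+2) (show 1 ≤ (j:ℕ) by omega)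
            exact absurd hd (by omega)
          · have e : (j:ℕ)*(2*n+2) = 2*((j:ℕ)*(n+1)) := by ring
            exact absurd hd (by omega)
          · rcases le_or_gt (j:ℕ) j0 with hc | hc
            · have := Nat.mul_le_mul_right (2*n+2) hc
              exact absurd hd (by omega)
            · have h3 := Nat.mul_le_mul_right (2*n+2) (show j0 + 1 ≤ (j:ℕ) by omega)
              have h4 : (j0+1)*(2*n+2) = j0*(2*n+2) + 1*(2*n+2) := by ring
              exact absurd hd (by omega)
          · have := Nat.mul_le_mul_right (2*n+2) (show (j:ℕ) ≤ m by omega)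
            exact absurd hd (by omega)
      · rw [if_neg h1, if_neg h2]
        constructor
        · rintro (ha | ⟨ha, _⟩)
          · exact ha.elim
          · exact absurd ha h2
        · have eJ : (j:ℕ)*(2*n+2) = 2*((j:ℕ)*(n+1)) := by ring
          have hJ1 := Nat.mul_le_mul_right (2*n+2) (show 1 ≤ (j:ℕ) by omega)
          rintro (hd | ⟨i0, hb1, hb2, hd⟩ | ⟨j0, hb1, hb2, hd⟩ | hd)
          · exact absurd hd (by omega)
          · exact absurd hd (by omega)
          · have e : j0*(2*n+2) = 2*(j0*(n+1)) := by ring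
            exact absurd hd (by omega)
          · exact absurd hd (by omega)
    -- inr inr
    · by_cases h1 : j = 0 <;> by_cases h2 : j' = 0
      · exact absurd (congrArg Sum.inr (Fin.ext (show j = j' by omega))) hxy
      · rw [if_pos h1, if_neg h2]
        have hle := Nat.mul_le_mul_right (2*n+2) (show (j':ℕ) ≤ m by omega)
        constructor
        · intro _
          by_cases hjm : (j':ℕ) = m
          · refine Or.inl ?_
            rw [hjm]
            omega
          · refine Or.inr (Or.inr (Or.inl ⟨m - j', by omega, by omega, ?_⟩))
            have e3 : (m - (j':ℕ))*(2*n+2) + (j':ℕ)*(2*n+2) = m*(2*n+2) := by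
              rw [← Nat.add_mul]; congr 1; omega
            omega
        · intro _; exact Or.inl ⟨h1, h2⟩
      · rw [if_neg h1, if_pos h2]
        have hle := Nat.mul_le_mul_right (2*n+2) (show (j:ℕ) ≤ m by omega)
        constructor
        · intro _
          by_cases hjm : (j:ℕ) = m
          · refine Or.inl ?_
            rw [hjm]
            omega
          · refine Or.inr (Or.inr (Or.inl ⟨m - j, by omega, by omega, ?_⟩))
            have e3 : (m - (j:ℕ))*(2*n+2) + (j:ℕ)*(2*n+2) = m*(2*n+2) := by
              rw [← Nat.add_mul]; congr 1; omega
            omega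
        · intro _; exact Or.inr ⟨h2, h1⟩
      · rw [if_neg h1, if_neg h2]
        constructor
        · rintro (⟨ha, _⟩ | ⟨ha, _⟩)
          · exact absurd ha h1
          · exact absurd ha h2
        · have eJ : (j:ℕ)*(2*n+2) = 2*((j:ℕ)*(n+1)) := by ring
          have eJ' : (j':ℕ)*(2*n+2) = 2*((j':ℕ)*(n+1)) := by ring
          have hJ1 := Nat.mul_le_mul_right (2*n+2) (show 1 ≤ (j:ℕ) by omega)
          have hJ1' := Nat.mul_le_mul_right (2*n+2) (show 1 ≤ (j':ℕ) by omega)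
          have hJm := Nat.mul_le_mul_right (2*n+2) (show (j:ℕ) ≤ m by omega)
          have hJm' := Nat.mul_le_mul_right (2*n+2) (show (j':ℕ) ≤ m by omega)
          have hne : (j:ℕ) ≠ (j':ℕ) := by
            intro h; exact hxy (congrArg Sum.inr (Fin.ext h))
          rintro (hd | ⟨i0, hb1, hb2, hd⟩ | ⟨j0, hb1, hb2, hd⟩ | hd)
          · rcases lt_or_gt_of_ne hne with hc | hc
            · have h3 := Nat.mul_le_mul_right (2*n+2) (show (j:ℕ) + 1 ≤ (j':ℕ) by omega)
              have h4 : ((j:ℕ)+1)*(2*n+2) = (j:ℕ)*(2*n+2) + 1*(2*n+2) := by ring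
              exact absurd hd (by omega)
            · have h3 := Nat.mul_le_mul_right (2*n+2) (show (j':ℕ) + 1 ≤ (j:ℕ) by omega)
              have h4 : ((j':ℕ)+1)*(2*n+2) = (j':ℕ)*(2*n+2) + 1*(2*n+2) := by ring
              exact absurd hd (by omega)
          · exact absurd hd (by omega)
          · -- |j - j'| * A = 2n + j0 * A impossible
            rcases lt_or_gt_of_ne hne with hc | hc
            · have e3 : ((j':ℕ) - (j:ℕ))*(2*n+2) + (j:ℕ)*(2*n+2) = (j':ℕ)*(2*n+2) := by
                rw [← Nat.add_mul]; congr 1; omega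
              rcases le_or_gt ((j':ℕ) - (j:ℕ)) j0 with hc2 | hc2
              · have := Nat.mul_le_mul_right (2*n+2) hc2
                exact absurd hd (by omega)
              · have h3 := Nat.mul_le_mul_right (2*n+2) (show j0 + 1 ≤ (j':ℕ) - (j:ℕ) by omega)
                have h4 : (j0+1)*(2*n+2) = j0*(2*n+2) + 1*(2*n+2) := by ring
                exact absurd hd (by omega)
            · have e3 : ((j:ℕ) - (j':ℕ))*(2*n+2) + (j':ℕ)*(2*n+2) = (j:ℕ)*(2*n+2) := by
                rw [← Nat.add_mul]; congr 1; omega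
              rcases le_or_gt ((j:ℕ) - (j':ℕ)) j0 with hc2 | hc2
              · have := Nat.mul_le_mul_right (2*n+2) hc2
                exact absurd hd (by omega)
              · have h3 := Nat.mul_le_mul_right (2*n+2) (show j0 + 1 ≤ (j:ℕ) - (j':ℕ) by omega)
                have h4 : (j0+1)*(2*n+2) = j0*(2*n+2) + 1*(2*n+2) := by ring
                exact absurd hd (by omega)
          · exact absurd hd (by omega)
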